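/- arXiv:1507.01600 — 2 statements merged into one kernel-verified Lean document; each statement's English description precedes it below -/
import Mathlib

section
/- For every integer N ≥ 2 there exist m = 2^{2(N−1)} matrices U₁, …, U_m of size 2^N × 2^N, each of which is an N-fold Kronecker product V₁ ⊗ V₂ ⊗ … ⊗ V_N of unitary 2×2 complex matrices, such that for every 2^N × 2^N complex matrix ρ one has (1/m)·Σᵢ Uᵢ ρ Uᵢ† = 2^{−N}(Tr(ρ)·I + Σ_{j=1}^{3} Tr(ρ σ_j^{⊗N}) σ_j^{⊗N}). In particular, every N-qubit density matrix ρ is mapped by this mixture of local unitaries to the M³_N state ϖ(c₁,c₂,c₃) with c_j = Tr(ρ σ_j^{⊗N}). -/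
open Matrix BigOperators Polynomial
open scoped ComplexOrder

/-- The three Pauli matrices. -/
noncomputable def pauli : Fin 3 → Matrix (Fin 2) (Fin 2) ℂ :=
  ![!![0, 1; 1, 0], !![0, -Complex.I; Complex.I, 0], !![1, 0; 0, -1]]

/-- The `N`-fold Kronecker power of a 2×2 matrix, with rows and columns indexed by
`Fin N → Fin 2` (the `N`-qubit computational basis). -/
noncomputable def kronPow (A : Matrix (Fin 2) (Fin 2) ℂ) (N : ℕ) :
    Matrix (Fin N → Fin 2) (Fin N → Fin 2) ℂ :=
  Matrix.of fun i j => ∏ k, A (i k) (j k)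

/-- The `M³_N` state `ϖ(c) = 2^{-N} (I + c₁ σ₁^{⊗N} + c₂ σ₂^{⊗N} + c₃ σ₃^{⊗N})`. -/
noncomputable def Mstate (N : ℕ) (c : Fin 3 → ℝ) :
    Matrix (Fin N → Fin 2) (Fin N → Fin 2) ℂ :=
  ((2 : ℂ) ^ N)⁻¹ • (1 + ∑ j : Fin 3, (c j : ℂ) • kronPow (pauli j) N)


/-- A Kronecker product `V₁ ⊗ V₂ ⊗ … ⊗ V_N` of `N` matrices of size 2×2, with rows and
columns indexed by `Fin N → Fin 2`. -/
noncomputable def localProd {N : ℕ} (V : Fin N → Matrix (Fin 2) (Fin 2) ℂ) :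
    Matrix (Fin N → Fin 2) (Fin N → Fin 2) ℂ :=
  Matrix.of fun i j => ∏ k, V k (i k) (j k)

/-!
The mixture is the twirl over the Pauli strings `σ_{a₁} ⊗ ⋯ ⊗ σ_{a_N}` that commute with all
three `σ_j^{⊗N}`. Labelling `1, σ₁, σ₂, σ₃` by `𝔽₂²` so that two Pauli matrices anticommute
exactly when the symplectic form of their labels is `1`, these are the strings whose labels sum to
`0`; there are `4^{N-1}` of them, since the last letter is determined by the others. By character
orthogonality on `𝔽₂²`, the indicator of this subgroup is `¼ ∑_t χ_t(∑ₖ aₖ)`, and for each `t` the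
signed twirl over all strings factorises over the qubits into the single-qubit identity
`∑_x χ_t(x) σ_x A σ_x = 2 tr(A σ_t) σ_t`, giving `2^N tr(ρ σ_t^{⊗N}) σ_t^{⊗N}`.
-/

lemma AddChar.map_sum_eq_prod {ι A M : Type*} [AddCommMonoid A] [CommMonoid M]
    (ψ : AddChar A M) (s : Finset ι) (f : ι → A) : ψ (∑ i ∈ s, f i) = ∏ i ∈ s, ψ (f i) := by
  classical
  induction s using Finset.induction_on with
  | empty => simp
  | insert i s hi ih => rw [Finset.sum_insert hi, Finset.prod_insert hi, AddChar.map_add_eq_mul, ih]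

lemma localProd_conjTranspose {N : ℕ} (V : Fin N → Matrix (Fin 2) (Fin 2) ℂ) :
    (localProd V)ᴴ = localProd fun k => (V k)ᴴ := by
  ext i j
  simp [localProd, conjTranspose_apply, star_prod]

lemma kronPow_one (N : ℕ) : kronPow 1 N = 1 := by
  ext i j
  simp only [kronPow, of_apply, one_apply, Finset.prod_boole, funext_iff]
  simp

lemma sum_prod_smul_localProd_mul_localProd {ι : Type*} [Fintype ι] {M : ℕ} (w : ι → ℂ)
    (A B : ι → Matrix (Fin 2) (Fin 2) ℂ) (c : ℂ) (C D : Matrix (Fin 2) (Fin 2) ℂ)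
    (h : ∀ i j j' l, ∑ x, w x * (A x i j * B x j' l) = c * (C i l * D j' j))
    (ρ : Matrix (Fin M → Fin 2) (Fin M → Fin 2) ℂ) :
    ∑ a : Fin M → ι, (∏ k, w (a k)) •
        (localProd (fun k => A (a k)) * ρ * localProd (fun k => B (a k))) =
      (c ^ M * (ρ * kronPow D M).trace) • kronPow C M := by
  ext i l
  have hsite : ∀ j j' : Fin M → Fin 2,
      ∑ a : Fin M → ι, ∏ k, w (a k) * (A (a k) (i k) (j k) * B (a k) (j' k) (l k)) =
        c ^ M * (kronPow C M i l * kronPow D M j' j) := by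
    intro j j'
    rw [← Fintype.prod_sum fun k x => w x * (A x (i k) (j k) * B x (j' k) (l k))]
    simp only [h, kronPow, of_apply, Finset.prod_mul_distrib, Finset.prod_const,
      Finset.card_univ, Fintype.card_fin]
  calc (∑ a : Fin M → ι, (∏ k, w (a k)) •
          (localProd (fun k => A (a k)) * ρ * localProd (fun k => B (a k)))) i l
      = ∑ j', ∑ j, ρ j j' * ∑ a : Fin M → ι,
          ∏ k, w (a k) * (A (a k) (i k) (j k) * B (a k) (j' k) (l k)) := by
        simp only [Matrix.sum_apply, Matrix.smul_apply, smul_eq_mul, mul_apply, localProd,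
          of_apply, Finset.sum_mul, Finset.mul_sum, Finset.prod_mul_distrib]
        rw [Finset.sum_comm]
        refine Finset.sum_congr rfl fun j' _ => ?_
        rw [Finset.sum_comm]
        refine Finset.sum_congr rfl fun j _ => Finset.sum_congr rfl fun a _ => ?_
        ring
    _ = ((c ^ M * (ρ * kronPow D M).trace) • kronPow C M) i l := by
        simp only [hsite, Matrix.smul_apply, smul_eq_mul, trace, diag_apply, mul_apply,
          Finset.sum_mul, Finset.mul_sum]
        rw [Finset.sum_comm]
        refine Finset.sum_congr rfl fun j' _ => Finset.sum_congr rfl fun j _ => ?_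
        ring

def balancedStringEquiv {α K : Type*} [AddCommGroup K] (e : α ≃ K) (n : ℕ) :
    (Fin n → α) ≃ {a : Fin (n + 1) → α // ∑ k, e (a k) = 0} where
  toFun a := ⟨Fin.snoc a (e.symm (-∑ k, e (a k))), by simp [Fin.sum_univ_castSucc]⟩
  invFun a := Fin.init a.1
  left_inv a := by simp
  right_inv := by
    rintro ⟨a, ha⟩
    rw [Fin.sum_univ_castSucc] at ha
    have hlast : a (Fin.last n) = e.symm (-∑ k, e (Fin.init a k)) := by
      rw [Equiv.eq_symm_apply, eq_neg_iff_add_eq_zero, add_comm]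
      exact ha
    exact Subtype.ext (by simp only [← hlast, Fin.snoc_init_self])

lemma ofReal_re_trace_mul {n : Type*} [Fintype n] {A B : Matrix n n ℂ} (hA : A.IsHermitian)
    (hB : B.IsHermitian) : (((A * B).trace.re : ℝ) : ℂ) = (A * B).trace := by
  rw [← Complex.conj_eq_iff_re, starRingEnd_apply, ← trace_conjTranspose, conjTranspose_mul,
    hA.eq, hB.eq, trace_mul_comm]

namespace PauliTwirl

noncomputable def pauliBasis : Fin 4 → Matrix (Fin 2) (Fin 2) ℂ := vecCons 1 pauli

-- `(x, z)` labels `X^x Z^z` up to phase, so `sympForm` is `1` exactly on anticommuting pairs.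
def pauliLabel : Fin 4 ≃ ZMod 2 × ZMod 2 where
  toFun := ![(0, 0), (1, 0), (1, 1), (0, 1)]
  invFun s := ![![0, 3], ![1, 2]] s.1 s.2
  left_inv := by decide
  right_inv := by decide

def sympForm (s t : ZMod 2 × ZMod 2) : ZMod 2 := s.1 * t.2 + s.2 * t.1

lemma sympForm_add_left (s s' t : ZMod 2 × ZMod 2) :
    sympForm (s + s') t = sympForm s t + sympForm s' t := by
  simp only [sympForm, Prod.fst_add, Prod.snd_add]
  ring

noncomputable def commChar (t : ZMod 2 × ZMod 2) : AddChar (ZMod 2 × ZMod 2) ℂ where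
  toFun s := (-1) ^ (sympForm s t).val
  map_zero_eq_one' := by simp [sympForm]
  map_add_eq_mul' s s' := by
    rw [sympForm_add_left, ZMod.val_add, ← neg_one_pow_eq_pow_mod_two, pow_add]

lemma commChar_apply (s t : ZMod 2 × ZMod 2) : commChar t s = (-1) ^ (sympForm s t).val := rfl

lemma sum_commChar (s : ZMod 2 × ZMod 2) :
    ∑ t : Fin 4, commChar (pauliLabel t) s = if s = 0 then 4 else 0 := by
  obtain ⟨x, rfl⟩ := pauliLabel.surjective s
  simp only [Fin.sum_univ_four, commChar_apply]
  fin_cases x <;> norm_num [pauliLabel, sympForm, ZMod.val_one, cons_val_two, cons_val_three,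
    show (1 + 1 : ZMod 2) = 0 from rfl]

-- Entrywise form of `∑_x χ_t(x) σ_x A σ_x = 2 tr(A σ_t) σ_t`.
lemma sum_commChar_mul_pauliBasis (t : Fin 4) (i j j' l : Fin 2) :
    ∑ x, commChar (pauliLabel t) (pauliLabel x) * (pauliBasis x i j * pauliBasis x j' l) =
      2 * (pauliBasis t i l * pauliBasis t j' j) := by
  simp only [Fin.sum_univ_four, commChar_apply]
  fin_cases t <;> fin_cases i <;> fin_cases j <;> fin_cases j' <;> fin_cases l <;>
    simp [pauliLabel, sympForm, pauliBasis, pauli, ZMod.val_one,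
      show (1 + 1 : ZMod 2) = 0 from rfl] <;> norm_num

lemma pauliBasis_conjTranspose (x : Fin 4) : (pauliBasis x)ᴴ = pauliBasis x := by
  fin_cases x <;> ext i j <;> fin_cases i <;> fin_cases j <;>
    simp [pauliBasis, pauli, conjTranspose_apply]

lemma pauliBasis_mem_unitaryGroup (x : Fin 4) : pauliBasis x ∈ unitaryGroup (Fin 2) ℂ := by
  rw [mem_unitaryGroup_iff, star_eq_conjTranspose, pauliBasis_conjTranspose]
  fin_cases x <;> ext i j <;> fin_cases i <;> fin_cases j <;>
    simp [pauliBasis, pauli, mul_apply, Fin.sum_univ_two, one_apply]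

noncomputable def pauliString {M : ℕ} (a : Fin M → Fin 4) :
    Matrix (Fin M → Fin 2) (Fin M → Fin 2) ℂ :=
  localProd fun k => pauliBasis (a k)

lemma pauliString_conjTranspose {M : ℕ} (a : Fin M → Fin 4) :
    (pauliString a)ᴴ = pauliString a := by
  simp only [pauliString, localProd_conjTranspose, pauliBasis_conjTranspose]

lemma sum_prod_commChar_smul_pauliString_conj {M : ℕ} (t : Fin 4)
    (ρ : Matrix (Fin M → Fin 2) (Fin M → Fin 2) ℂ) :
    ∑ a : Fin M → Fin 4, (∏ k, commChar (pauliLabel t) (pauliLabel (a k))) •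
        (pauliString a * ρ * (pauliString a)ᴴ) =
      (2 ^ M * (ρ * kronPow (pauliBasis t) M).trace) • kronPow (pauliBasis t) M := by
  simp only [pauliString_conjTranspose]
  exact sum_prod_smul_localProd_mul_localProd _ _ _ _ _ _ (sum_commChar_mul_pauliBasis t) ρ

lemma sum_balanced_pauliString_conj {M : ℕ} (ρ : Matrix (Fin M → Fin 2) (Fin M → Fin 2) ℂ) :
    ∑ a : {a : Fin M → Fin 4 // ∑ k, pauliLabel (a k) = 0},
        pauliString a.1 * ρ * (pauliString a.1)ᴴ =
      (2 ^ M / 4 : ℂ) • ∑ t, (ρ * kronPow (pauliBasis t) M).trace • kronPow (pauliBasis t) M := by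
  classical
  have hindicator : ∀ a : Fin M → Fin 4,
      (if ∑ k, pauliLabel (a k) = 0 then pauliString a * ρ * (pauliString a)ᴴ else 0) =
        (4⁻¹ : ℂ) • ∑ t, (∏ k, commChar (pauliLabel t) (pauliLabel (a k))) •
          (pauliString a * ρ * (pauliString a)ᴴ) := by
    intro a
    simp only [← AddChar.map_sum_eq_prod, ← Finset.sum_smul, sum_commChar, smul_smul]
    split_ifs <;> norm_num
  rw [← Finset.sum_subtype (Finset.univ.filter fun a : Fin M → Fin 4 => ∑ k, pauliLabel (a k) = 0)
    (by simp) fun a => pauliString a * ρ * (pauliString a)ᴴ, Finset.sum_filter]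
  simp only [hindicator, ← Finset.smul_sum]
  rw [Finset.sum_comm]
  simp only [sum_prod_commChar_smul_pauliString_conj, Finset.smul_sum, smul_smul]
  refine Finset.sum_congr rfl fun t _ => ?_
  congr 1
  ring

lemma sum_trace_mul_kronPow_pauliBasis {M : ℕ} (ρ : Matrix (Fin M → Fin 2) (Fin M → Fin 2) ℂ) :
    ∑ t, (ρ * kronPow (pauliBasis t) M).trace • kronPow (pauliBasis t) M =
      ρ.trace • 1 + ∑ j, (ρ * kronPow (pauli j) M).trace • kronPow (pauli j) M := by
  simp [Fin.sum_univ_succ, pauliBasis, kronPow_one]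

end PauliTwirl

open PauliTwirl in
theorem stmt4 (N : ℕ) (hN : 2 ≤ N) :
    ∃ U : Fin (2^(2*(N-1))) → Matrix (Fin N → Fin 2) (Fin N → Fin 2) ℂ,
      (∀ m, ∃ V : Fin N → Matrix (Fin 2) (Fin 2) ℂ,
        (∀ k, V k ∈ Matrix.unitaryGroup (Fin 2) ℂ) ∧ U m = localProd V) ∧
      (∀ ρ : Matrix (Fin N → Fin 2) (Fin N → Fin 2) ℂ,
        ((2^(2*(N-1)) : ℂ))⁻¹ • ∑ m, U m * ρ * (U m)ᴴ =
          ((2 : ℂ)^N)⁻¹ • (ρ.trace • 1 +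
            ∑ j : Fin 3, (ρ * kronPow (pauli j) N).trace • kronPow (pauli j) N)) ∧
      (∀ ρ : Matrix (Fin N → Fin 2) (Fin N → Fin 2) ℂ, ρ.PosSemidef → ρ.trace = 1 →
        ((2^(2*(N-1)) : ℂ))⁻¹ • ∑ m, U m * ρ * (U m)ᴴ =
          Mstate N (fun j => ((ρ * kronPow (pauli j) N).trace).re)) := by
  obtain ⟨n, rfl⟩ : ∃ n, N = n + 1 := ⟨N - 1, by omega⟩
  rw [Nat.add_sub_cancel]
  let e : Fin (2 ^ (2 * n)) ≃ {a : Fin (n + 1) → Fin 4 // ∑ k, pauliLabel (a k) = 0} :=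
    (finCongr (by rw [pow_mul]; norm_num)).trans
      (finFunctionFinEquiv.symm.trans (balancedStringEquiv pauliLabel n))
  have htwirl : ∀ ρ : Matrix (Fin (n + 1) → Fin 2) (Fin (n + 1) → Fin 2) ℂ,
      ((2 ^ (2 * n) : ℂ))⁻¹ • ∑ m, pauliString (e m).1 * ρ * (pauliString (e m).1)ᴴ =
        ((2 : ℂ) ^ (n + 1))⁻¹ • (ρ.trace • 1 +
          ∑ j, (ρ * kronPow (pauli j) (n + 1)).trace • kronPow (pauli j) (n + 1)) := by
    intro ρ
    rw [e.sum_comp fun a => pauliString a.1 * ρ * (pauliString a.1)ᴴ,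
      sum_balanced_pauliString_conj, sum_trace_mul_kronPow_pauliBasis, smul_smul]
    congr 1
    field_simp
    ring
  refine ⟨fun m => pauliString (e m).1,
    fun m => ⟨_, fun k => pauliBasis_mem_unitaryGroup _, rfl⟩, htwirl, fun ρ hρ htr => ?_⟩
  -- `kronPow (pauli j)` is, by definition, the constant Pauli string `j.succ`.
  have hpauli : ∀ j, (kronPow (pauli j) (n + 1)).IsHermitian := fun j =>
    pauliString_conjTranspose fun _ => j.succ
  simp only [htwirl, Mstate, htr, one_smul, ofReal_re_trace_mul hρ.isHermitian (hpauli _)]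
end

section
/- Let N ≥ 2 be an even integer and let D be a real-valued function on pairs of 2^N × 2^N complex matrices that is contractive under quantum channels. Then for all p, q ∈ [0,1] with p + q ≤ 1 and all h ∈ [0,1): D(ω(p,q,h), ω(p,q,0)) = D(ω(1/3,1/3,h), ω(1/3,1/3,0)). -/
open Matrix BigOperators Polynomial
open scoped ComplexOrder

/-- A quantum channel on `2^N × 2^N` complex matrices: a map admitting a Kraus
representation `Φ(ρ) = Σᵢ Aᵢ ρ Aᵢ†` with `Σᵢ Aᵢ† Aᵢ = I`. -/
def IsQuantumChannel (N : ℕ)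
    (Φ : Matrix (Fin N → Fin 2) (Fin N → Fin 2) ℂ → Matrix (Fin N → Fin 2) (Fin N → Fin 2) ℂ) :
    Prop :=
  ∃ (m : ℕ) (A : Fin m → Matrix (Fin N → Fin 2) (Fin N → Fin 2) ℂ),
    (∑ i, (A i)ᴴ * A i = 1) ∧ ∀ ρ, Φ ρ = ∑ i, A i * ρ * (A i)ᴴ

/-- `D` is contractive under quantum channels. -/
def Contractive (N : ℕ)
    (D : Matrix (Fin N → Fin 2) (Fin N → Fin 2) ℂ → Matrix (Fin N → Fin 2) (Fin N → Fin 2) ℂ → ℝ) :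
    Prop :=
  ∀ Φ, IsQuantumChannel N Φ →
    ∀ ρ σ : Matrix (Fin N → Fin 2) (Fin N → Fin 2) ℂ, D (Φ ρ) (Φ σ) ≤ D ρ σ

/-- The `M³_N` state `ω(p,q,h)` with correlation triple
`p·V₁(h) + q·V₂(h) + (1−p−q)·V₃(h)`, where `V₁(h) = (−h, (−1)^{N/2} h, −1)`,
`V₂(h) = (−h, (−1)^{N/2}, −h)`, `V₃(h) = (−1, (−1)^{N/2} h, −h)`. -/
noncomputable def omegaState (N : ℕ) (p q h : ℝ) :
    Matrix (Fin N → Fin 2) (Fin N → Fin 2) ℂ :=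
  Mstate N (p • ![-h, (-1:ℝ)^(N/2) * h, -1] + q • ![-h, (-1:ℝ)^(N/2), -h]
    + (1 - p - q) • ![(-1:ℝ), (-1:ℝ)^(N/2) * h, -h])

/-!
For even `N` the operators `X = σ₁^{⊗N}` and `Z = σ₃^{⊗N}` are commuting self-adjoint involutions
and `σ₂^{⊗N} = (-1)^{N/2} X Z`, so every `M³_N` state is diagonal with respect to the four joint
eigenprojections of `(X, Z)`. The state `ω(p,q,h)` has eigenvalue `2(1+h)/2^N` on the `(-1,-1)`
block and `2(1-h)w/2^N` on the other three blocks, with weights `w = (q, p, 1-p-q)`.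
A Pauli matrix acting on a single qubit permutes these blocks, so there is a measure-and-prepare
channel that keeps the `(-1,-1)` block and redistributes the mass of the other three blocks
according to arbitrary prescribed weights. It maps `ω(p,q,h)` to `ω(p',q',h)` for every `h`, and
contractivity of `D` under such channels in both directions gives the equality.
-/

section KronProd

variable {ι m R : Type*} [Fintype ι] [CommSemiring R]

def kronProd (F : ι → Matrix m m R) : Matrix (ι → m) (ι → m) R :=
  of fun i j => ∏ k, F k (i k) (j k)

theorem kronPow_eq_kronProd (A : Matrix (Fin 2) (Fin 2) ℂ) (N : ℕ) :
    kronPow A N = kronProd fun _ => A := rfl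

theorem kronProd_mul [DecidableEq ι] [Fintype m] (F G : ι → Matrix m m R) :
    kronProd F * kronProd G = kronProd (F * G) := by
  ext i j
  simp only [kronProd, mul_apply, of_apply, Pi.mul_apply, Finset.prod_univ_sum,
    Fintype.piFinset_univ, ← Finset.prod_mul_distrib]

theorem kronProd_one [DecidableEq m] : kronProd (1 : ι → Matrix m m R) = 1 := by
  ext i j
  simp only [kronProd, of_apply, Pi.one_apply, one_apply, Finset.prod_boole]
  simp [funext_iff]

theorem kronProd_conjTranspose [StarRing R] (F : ι → Matrix m m R) :
    (kronProd F)ᴴ = kronProd fun k => (F k)ᴴ := by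
  ext i j
  simp [kronProd, conjTranspose_apply]

theorem kronProd_update_smul [DecidableEq ι] (F : ι → Matrix m m R) (k : ι) (c : R)
    (A : Matrix m m R) :
    kronProd (Function.update F k (c • A)) = c • kronProd (Function.update F k A) := by
  have hfactor : ∀ (i j : ι → m) (l : ι), Function.update F k (c • A) l (i l) (j l)
      = (if l = k then c else 1) * Function.update F k A l (i l) (j l) := by
    intro i j l
    rcases eq_or_ne l k with rfl | hl <;> simp [*]
  ext i j
  simp only [kronProd, of_apply, Matrix.smul_apply, smul_eq_mul, hfactor,
    Finset.prod_mul_distrib, Finset.prod_ite_eq', Finset.mem_univ, if_true]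

theorem kronProd_const_smul (c : R) (A : Matrix m m R) :
    (kronProd fun _ : ι => c • A) = c ^ Fintype.card ι • kronProd fun _ => A := by
  ext i j
  simp [kronProd, Finset.prod_mul_distrib]

end KronProd

section SiteOp

variable {ι m R : Type*} [Fintype ι] [DecidableEq ι] [DecidableEq m] [CommRing R]

def siteOp (k : ι) (A : Matrix m m R) : Matrix (ι → m) (ι → m) R :=
  kronProd (Function.update 1 k A)

theorem siteOp_conjTranspose [StarRing R] (k : ι) (A : Matrix m m R) :
    (siteOp k A)ᴴ = siteOp k Aᴴ := by
  rw [siteOp, siteOp, kronProd_conjTranspose]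
  congr 1
  funext l
  rcases eq_or_ne l k with rfl | hl <;> simp [*]

theorem siteOp_conjTranspose_mul_self [StarRing R] [Fintype m] (k : ι)
    {A : Matrix m m R} (hA : Aᴴ * A = 1) : (siteOp k A)ᴴ * siteOp k A = 1 := by
  rw [siteOp_conjTranspose, siteOp, siteOp, kronProd_mul, ← kronProd_one]
  congr 1
  funext l
  rcases eq_or_ne l k with rfl | hl <;> simp [*]

theorem siteOp_mul_kronProd_const_mul (k : ι) [Fintype m] (A B C : Matrix m m R) :
    siteOp k A * kronProd (fun _ => B) * siteOp k C
      = kronProd (Function.update (fun _ => B) k (A * B * C)) := by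
  rw [siteOp, siteOp, kronProd_mul, kronProd_mul]
  congr 1
  funext l
  rcases eq_or_ne l k with rfl | hl <;> simp [*]

theorem siteOp_conj_kronProd_const [StarRing R] [Fintype m] (k : ι) {A B : Matrix m m R} {c : R}
    (h : A * B * Aᴴ = c • B) :
    siteOp k A * kronProd (fun _ => B) * (siteOp k A)ᴴ = c • kronProd (fun _ => B) := by
  rw [siteOp_conjTranspose, siteOp_mul_kronProd_const_mul, h, kronProd_update_smul,
    Function.update_eq_self]

end SiteOp

section Pauli

open Complex

theorem pauli_mul_self (a : Fin 3) : pauli a * pauli a = 1 := by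
  fin_cases a <;> ext i j <;> fin_cases i <;> fin_cases j <;>
    simp [pauli, mul_apply, Fin.sum_univ_two, one_apply]

theorem pauli_isHermitian (a : Fin 3) : (pauli a).IsHermitian := by
  fin_cases a <;> ext i j <;> fin_cases i <;> fin_cases j <;> simp [pauli]

theorem pauli_zero_mul_pauli_two : pauli 0 * pauli 2 = (-I) • pauli 1 := by
  ext i j; fin_cases i <;> fin_cases j <;> simp [pauli, mul_apply, Fin.sum_univ_two]

theorem pauli_two_mul_pauli_zero : pauli 2 * pauli 0 = I • pauli 1 := by
  ext i j; fin_cases i <;> fin_cases j <;> simp [pauli, mul_apply, Fin.sum_univ_two]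

end Pauli

section KronPow

variable {N : ℕ}

theorem kronPow_mul (A B : Matrix (Fin 2) (Fin 2) ℂ) :
    kronPow A N * kronPow B N = kronPow (A * B) N :=
  kronProd_mul _ _

theorem kronPow_smul (c : ℂ) (A : Matrix (Fin 2) (Fin 2) ℂ) :
    kronPow (c • A) N = c ^ N • kronPow A N := by
  rw [kronPow_eq_kronProd, kronProd_const_smul, Fintype.card_fin, kronPow_eq_kronProd]

theorem kronPow_pauli_mul_self (a : Fin 3) : kronPow (pauli a) N * kronPow (pauli a) N = 1 := by
  rw [kronPow_mul, pauli_mul_self]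
  exact kronProd_one

theorem kronPow_pauli_isHermitian (a : Fin 3) : (kronPow (pauli a) N).IsHermitian := by
  rw [IsHermitian, kronPow_eq_kronProd, kronProd_conjTranspose, (pauli_isHermitian a).eq]

theorem Even.I_pow (hN : Even N) : Complex.I ^ N = (-1) ^ (N / 2) := by
  obtain ⟨k, rfl⟩ := hN
  rw [← two_mul, pow_mul, Complex.I_sq, Nat.mul_div_cancel_left k two_pos]

theorem kronPow_pauli_zero_mul_two (hN : Even N) :
    kronPow (pauli 0) N * kronPow (pauli 2) N = (-1 : ℂ) ^ (N / 2) • kronPow (pauli 1) N := by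
  rw [kronPow_mul, pauli_zero_mul_pauli_two, kronPow_smul, neg_pow, hN.neg_one_pow, one_mul,
    hN.I_pow]

theorem kronPow_pauli_two_mul_zero (hN : Even N) :
    kronPow (pauli 2) N * kronPow (pauli 0) N = (-1 : ℂ) ^ (N / 2) • kronPow (pauli 1) N := by
  rw [kronPow_mul, pauli_two_mul_pauli_zero, kronPow_smul, hN.I_pow]

theorem commute_kronPow_pauli_zero_two (hN : Even N) :
    Commute (kronPow (pauli 0) N) (kronPow (pauli 2) N) :=
  (kronPow_pauli_zero_mul_two hN).trans (kronPow_pauli_two_mul_zero hN).symm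

theorem kronPow_pauli_one_of_even (hN : Even N) :
    kronPow (pauli 1) N = (-1 : ℂ) ^ (N / 2) • (kronPow (pauli 0) N * kronPow (pauli 2) N) := by
  rw [kronPow_pauli_zero_mul_two hN, smul_smul, ← pow_add, ← two_mul, pow_mul, neg_one_sq,
    one_pow, one_smul]

end KronPow

section JointSignProj

variable {n : Type*} [Fintype n] [DecidableEq n] {A B : Matrix n n ℂ}

noncomputable def jointSignProj (A B : Matrix n n ℂ) (s t : ℤˣ) : Matrix n n ℂ :=
  (4 : ℂ)⁻¹ • ((1 + (s : ℤ) • A) * (1 + (t : ℤ) • B))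

theorem Commute.one_add_zsmul (h : Commute A B) (s t : ℤ) :
    Commute (1 + s • A) (1 + t • B) :=
  (Commute.one_left _).add_left ((Commute.one_right _).add_right ((h.smul_left s).smul_right t))

theorem one_add_units_zsmul_mul_self (hA : A * A = 1) (s : ℤˣ) :
    (1 + (s : ℤ) • A) * (1 + (s : ℤ) • A) = (2 : ℂ) • (1 + (s : ℤ) • A) := by
  rw [add_mul, mul_add, mul_add, smul_mul_smul_comm, Int.units_coe_mul_self, hA, one_smul,
    one_mul, mul_one, one_mul]
  module

theorem one_add_units_zsmul_mul_of_ne (hA : A * A = 1) {s s' : ℤˣ} (hs : s ≠ s') :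
    (1 + (s : ℤ) • A) * (1 + (s' : ℤ) • A) = 0 := by
  rw [Int.units_ne_iff_eq_neg.mp hs.symm, Units.val_neg, add_mul, mul_add, mul_add,
    smul_mul_smul_comm, mul_neg, Int.units_coe_mul_self, hA, one_mul, mul_one, one_mul]
  module

theorem jointSignProj_isHermitian (hA : A.IsHermitian) (hB : B.IsHermitian) (hAB : Commute A B)
    (s t : ℤˣ) : (jointSignProj A B s t).IsHermitian := by
  rw [IsHermitian, jointSignProj, conjTranspose_smul, conjTranspose_mul, conjTranspose_add,
    conjTranspose_add, conjTranspose_one, conjTranspose_zsmul, conjTranspose_zsmul, hA.eq, hB.eq,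
    ← (hAB.one_add_zsmul s t).eq]
  simp

theorem jointSignProj_mul_self (hA : A * A = 1) (hB : B * B = 1) (hAB : Commute A B)
    (s t : ℤˣ) : jointSignProj A B s t * jointSignProj A B s t = jointSignProj A B s t := by
  rw [jointSignProj, smul_mul_smul_comm, (hAB.symm.one_add_zsmul t s).mul_mul_mul_comm,
    one_add_units_zsmul_mul_self hA,
    one_add_units_zsmul_mul_self hB, smul_mul_smul_comm, smul_smul]
  norm_num

theorem jointSignProj_mul_of_ne (hA : A * A = 1) (hB : B * B = 1) (hAB : Commute A B)
    {s t s' t' : ℤˣ} (hst : (s, t) ≠ (s', t')) :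
    jointSignProj A B s t * jointSignProj A B s' t' = 0 := by
  rw [jointSignProj, jointSignProj, smul_mul_smul_comm,
    (hAB.symm.one_add_zsmul t s').mul_mul_mul_comm]
  rcases eq_or_ne s s' with rfl | hs
  · rw [one_add_units_zsmul_mul_of_ne hB fun ht => hst (by rw [ht]), mul_zero, smul_zero]
  · rw [one_add_units_zsmul_mul_of_ne hA hs, zero_mul, smul_zero]

theorem jointSignProj_conj {U : Matrix n n ℂ} (hU : Uᴴ * U = 1) {a b : ℤˣ}
    (hUA : U * A * Uᴴ = (a : ℤ) • A) (hUB : U * B * Uᴴ = (b : ℤ) • B) (s t : ℤˣ) :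
    U * jointSignProj A B s t * Uᴴ = jointSignProj A B (a * s) (b * t) := by
  have hconj : ∀ (C : Matrix n n ℂ) (c : ℤ), U * (1 + c • C) * Uᴴ = 1 + c • (U * C * Uᴴ) := by
    intro C c
    rw [mul_add, add_mul, mul_one, mul_eq_one_comm.mp hU, mul_smul_comm, smul_mul_assoc]
  have hsplit : U * ((1 + (s : ℤ) • A) * (1 + (t : ℤ) • B)) * Uᴴ
      = (U * (1 + (s : ℤ) • A) * Uᴴ) * (U * (1 + (t : ℤ) • B) * Uᴴ) := by
    simp only [mul_assoc, ← mul_assoc Uᴴ U, hU, one_mul]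
  rw [jointSignProj, jointSignProj, mul_smul_comm, smul_mul_assoc, hsplit, hconj, hconj, hUA,
    hUB, smul_smul, smul_smul, Units.val_mul, Units.val_mul, mul_comm (s : ℤ), mul_comm (t : ℤ)]

theorem jointSignProj_sum_signs (A B : Matrix n n ℂ) :
    jointSignProj A B 1 1 + jointSignProj A B 1 (-1) + jointSignProj A B (-1) 1
      + jointSignProj A B (-1) (-1) = 1 := by
  simp only [jointSignProj, Units.val_one, Units.val_neg, one_smul, neg_smul, add_mul, mul_add,
    one_mul, mul_one, mul_neg, neg_mul, ← smul_add]
  module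

end JointSignProj

section ProjectionConj

variable {n : Type*} [Fintype n] {Q : Matrix n n ℂ}

theorem conjTranspose_mul_mul_conjTranspose (hQ : Q.IsHermitian) (A B : Matrix n n ℂ) :
    (A * Q * Bᴴ)ᴴ = B * Q * Aᴴ := by
  rw [conjTranspose_mul, conjTranspose_mul, conjTranspose_conjTranspose, hQ.eq, mul_assoc]

theorem conjTranspose_mul_self_of_conj_projection [DecidableEq n] (hQ : Q.IsHermitian)
    (hQQ : IsIdempotentElem Q) {A : Matrix n n ℂ} (hA : Aᴴ * A = 1) (B : Matrix n n ℂ) :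
    (A * Q * Bᴴ)ᴴ * (A * Q * Bᴴ) = B * Q * Bᴴ := by
  rw [conjTranspose_mul_mul_conjTranspose hQ]
  simp only [mul_assoc]
  rw [← mul_assoc Aᴴ, hA, one_mul, ← mul_assoc Q Q, hQQ.eq]

end ProjectionConj

/-- Kraus operators of the measure-and-prepare channel that leaves the block
`U none * Q * (U none)ᴴ` alone and redistributes the total mass of the blocks
`U (some b) * Q * (U (some b))ᴴ` according to the weights `a`. -/
noncomputable def collapseKraus {n ι : Type*} [Fintype n] (U : Option ι → Matrix n n ℂ)
    (Q : Matrix n n ℂ) (a : ι → ℝ) : Option (ι × ι) → Matrix n n ℂ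
  | none => U none * Q * (U none)ᴴ
  | some (b', b) => (Real.sqrt (a b') : ℂ) • (U (some b') * Q * (U (some b))ᴴ)

section Collapse

variable {n ι : Type*} [Fintype n] [DecidableEq n] [Fintype ι]
  {U : Option ι → Matrix n n ℂ} {Q : Matrix n n ℂ}

theorem compress_sum_smul_conj (hU : ∀ c, (U c)ᴴ * U c = 1) (hQQ : IsIdempotentElem Q)
    (horth : ∀ c d, c ≠ d → U c * Q * (U c)ᴴ * (U d * Q * (U d)ᴴ) = 0)
    (l : Option ι → ℂ) (c : Option ι) :
    Q * (U c)ᴴ * (∑ d, l d • (U d * Q * (U d)ᴴ)) * U c * Q = l c • Q := by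
  rw [Finset.mul_sum, Finset.sum_mul, Finset.sum_mul, Finset.sum_eq_single c]
  · simp only [mul_smul_comm, smul_mul_assoc, mul_assoc]
    rw [← mul_assoc (U c)ᴴ, hU, one_mul, ← mul_assoc (U c)ᴴ, hU, one_mul, hQQ.eq, hQQ.eq]
  · intro d _ hdc
    have hQ' : Q * (U c)ᴴ = (U c)ᴴ * (U c * Q * (U c)ᴴ) := by
      simp only [← mul_assoc, hU, one_mul]
    rw [hQ', mul_smul_comm, smul_mul_assoc, smul_mul_assoc, mul_assoc (U c)ᴴ,
      horth c d hdc.symm]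
    simp
  · simp

theorem sum_collapseKraus_conjTranspose_mul (hU : ∀ c, (U c)ᴴ * U c = 1)
    (hQ : Q.IsHermitian) (hQQ : IsIdempotentElem Q) (hsum : ∑ c, U c * Q * (U c)ᴴ = 1)
    {a : ι → ℝ} (ha : ∀ b, 0 ≤ a b) (ha1 : ∑ b, a b = 1) :
    ∑ k, (collapseKraus U Q a k)ᴴ * collapseKraus U Q a k = 1 := by
  have hsome : ∀ b' b, (collapseKraus U Q a (some (b', b)))ᴴ * collapseKraus U Q a (some (b', b))
      = (a b' : ℂ) • (U (some b) * Q * (U (some b))ᴴ) := by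
    intro b' b
    rw [collapseKraus, conjTranspose_smul, smul_mul_smul_comm,
      conjTranspose_mul_self_of_conj_projection hQ hQQ (hU _), Complex.star_def,
      Complex.conj_ofReal, ← Complex.ofReal_mul, Real.mul_self_sqrt (ha b')]
  rw [Fintype.sum_option, Fintype.sum_prod_type]
  simp only [hsome]
  rw [Finset.sum_comm]
  simp only [← Finset.sum_smul, ← Complex.ofReal_sum, ha1, Complex.ofReal_one, one_smul]
  rw [collapseKraus, conjTranspose_mul_self_of_conj_projection hQ hQQ (hU _), ← hsum,
    Fintype.sum_option]

theorem sum_collapseKraus_mul_mul_conjTranspose (hU : ∀ c, (U c)ᴴ * U c = 1)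
    (hQ : Q.IsHermitian) (hQQ : IsIdempotentElem Q)
    (horth : ∀ c d, c ≠ d → U c * Q * (U c)ᴴ * (U d * Q * (U d)ᴴ) = 0)
    {a : ι → ℝ} (ha : ∀ b, 0 ≤ a b) (l : Option ι → ℂ) :
    ∑ k, collapseKraus U Q a k * (∑ c, l c • (U c * Q * (U c)ᴴ)) * (collapseKraus U Q a k)ᴴ
      = l none • (U none * Q * (U none)ᴴ)
        + (∑ b, l (some b)) • ∑ b, (a b : ℂ) • (U (some b) * Q * (U (some b))ᴴ) := by
  set ρ := ∑ c, l c • (U c * Q * (U c)ᴴ)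
  have hsandwich : ∀ c d, U c * Q * (U d)ᴴ * ρ * (U c * Q * (U d)ᴴ)ᴴ
      = l d • (U c * Q * (U c)ᴴ) := by
    intro c d
    rw [conjTranspose_mul_mul_conjTranspose hQ]
    have hmid : U c * Q * (U d)ᴴ * ρ * (U d * Q * (U c)ᴴ)
        = U c * (Q * (U d)ᴴ * ρ * U d * Q) * (U c)ᴴ := by
      simp only [mul_assoc]
    rw [hmid, compress_sum_smul_conj hU hQQ horth, mul_smul_comm, smul_mul_assoc]
  have hsome : ∀ b' b, collapseKraus U Q a (some (b', b)) * ρ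
      * (collapseKraus U Q a (some (b', b)))ᴴ
      = (a b' * l (some b)) • (U (some b') * Q * (U (some b'))ᴴ) := by
    intro b' b
    rw [collapseKraus, conjTranspose_smul, smul_mul_assoc, smul_mul_assoc, mul_smul_comm,
      hsandwich, smul_smul, smul_smul, Complex.star_def, Complex.conj_ofReal,
      ← Complex.ofReal_mul, Real.mul_self_sqrt (ha b')]
  rw [Fintype.sum_option, Fintype.sum_prod_type]
  simp only [hsome, ← Finset.sum_smul, ← Finset.mul_sum]
  rw [collapseKraus, hsandwich, Finset.smul_sum]
  simp only [smul_smul, mul_comm]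

end Collapse

theorem isQuantumChannel_of_kraus {N : ℕ} {κ : Type*} [Fintype κ]
    (K : κ → Matrix (Fin N → Fin 2) (Fin N → Fin 2) ℂ) (hK : ∑ k, (K k)ᴴ * K k = 1) :
    IsQuantumChannel N fun ρ => ∑ k, K k * ρ * (K k)ᴴ :=
  ⟨Fintype.card κ, fun i => K ((Fintype.equivFin κ).symm i),
    (Equiv.sum_comp (Fintype.equivFin κ).symm fun k => (K k)ᴴ * K k).trans hK,
    fun ρ => (Equiv.sum_comp (Fintype.equivFin κ).symm fun k => K k * ρ * (K k)ᴴ).symm⟩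

section Blocks

/-- Conjugation by `blockUnitary c` on one qubit maps the joint `(+1, +1)`-eigenspace of
`(σ₁^{⊗N}, σ₃^{⊗N})` onto the joint eigenspace with signs `blockSigns c`. -/
noncomputable def blockUnitary : Option (Fin 3) → Matrix (Fin 2) (Fin 2) ℂ
  | none => pauli 1
  | some b => ![1, pauli 0, pauli 2] b

def blockSigns : Option (Fin 3) → ℤˣ × ℤˣ
  | none => (-1, -1)
  | some b => ![(1, 1), (1, -1), (-1, 1)] b

theorem blockSigns_injective : Function.Injective blockSigns := by
  decide

theorem blockUnitary_conjTranspose_mul_self (c : Option (Fin 3)) :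
    (blockUnitary c)ᴴ * blockUnitary c = 1 := by
  rcases c with _ | b
  · rw [blockUnitary, (pauli_isHermitian 1).eq, pauli_mul_self]
  · fin_cases b <;> simp [blockUnitary, (pauli_isHermitian _).eq, pauli_mul_self]

theorem blockUnitary_conj_pauli_zero (c : Option (Fin 3)) :
    blockUnitary c * pauli 0 * (blockUnitary c)ᴴ = (((blockSigns c).1 : ℤ) : ℂ) • pauli 0 := by
  rcases c with _ | b
  · ext i j; fin_cases i <;> fin_cases j <;>
      simp [blockUnitary, blockSigns, pauli, mul_apply, Fin.sum_univ_two]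
  · fin_cases b <;> ext i j <;> fin_cases i <;> fin_cases j <;>
      simp [blockUnitary, blockSigns, pauli, mul_apply, Fin.sum_univ_two]

theorem blockUnitary_conj_pauli_two (c : Option (Fin 3)) :
    blockUnitary c * pauli 2 * (blockUnitary c)ᴴ = (((blockSigns c).2 : ℤ) : ℂ) • pauli 2 := by
  rcases c with _ | b
  · ext i j; fin_cases i <;> fin_cases j <;>
      simp [blockUnitary, blockSigns, pauli, mul_apply, Fin.sum_univ_two]
  · fin_cases b <;> ext i j <;> fin_cases i <;> fin_cases j <;>
      simp [blockUnitary, blockSigns, pauli, mul_apply, Fin.sum_univ_two]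

end Blocks

section BlockProj

variable {N : ℕ}

noncomputable def blockProj (N : ℕ) (c : Option (Fin 3)) :
    Matrix (Fin N → Fin 2) (Fin N → Fin 2) ℂ :=
  jointSignProj (kronPow (pauli 0) N) (kronPow (pauli 2) N) (blockSigns c).1 (blockSigns c).2

theorem siteOp_blockUnitary_conj (i : Fin N) (c : Option (Fin 3)) :
    siteOp i (blockUnitary c) * blockProj N (some 0) * (siteOp i (blockUnitary c))ᴴ
      = blockProj N c := by
  have hconj : ∀ a : Fin 3, ∀ s : ℤˣ,
      blockUnitary c * pauli a * (blockUnitary c)ᴴ = ((s : ℤ) : ℂ) • pauli a →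
      siteOp i (blockUnitary c) * kronPow (pauli a) N * (siteOp i (blockUnitary c))ᴴ
        = (s : ℤ) • kronPow (pauli a) N := by
    intro a s h
    rw [← Int.cast_smul_eq_zsmul ℂ]
    exact siteOp_conj_kronProd_const i h
  have h := jointSignProj_conj
    (siteOp_conjTranspose_mul_self i (blockUnitary_conjTranspose_mul_self c))
    (hconj 0 _ (blockUnitary_conj_pauli_zero c)) (hconj 2 _ (blockUnitary_conj_pauli_two c)) 1 1
  rwa [mul_one, mul_one] at h

theorem sum_blockProj : ∑ c, blockProj N c = 1 := by
  rw [Fintype.sum_option, Fin.sum_univ_three,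
    ← jointSignProj_sum_signs (kronPow (pauli 0) N) (kronPow (pauli 2) N)]
  simp only [blockProj, blockSigns, Nat.succ_eq_add_one, Nat.reduceAdd, cons_val_zero,
    cons_val_one, cons_val]
  abel

noncomputable def blockWeights (p q : ℝ) : Fin 3 → ℝ := ![q, p, 1 - p - q]

noncomputable def omegaWeight (N : ℕ) (p q h : ℝ) : Option (Fin 3) → ℝ
  | none => 2 * (1 + h) / 2 ^ N
  | some b => 2 * (1 - h) / 2 ^ N * blockWeights p q b

theorem omegaState_eq_sum_blockProj (hN : Even N) (p q h : ℝ) :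
    omegaState N p q h = ∑ c, (omegaWeight N p q h c : ℂ) • blockProj N c := by
  have hε : ((-1 : ℂ) ^ (N / 2)) * (-1) ^ (N / 2) = 1 := by
    rw [← pow_add, ← two_mul, pow_mul, neg_one_sq, one_pow]
  rw [omegaState, Mstate, Fin.sum_univ_three, kronPow_pauli_one_of_even hN, Fintype.sum_option,
    Fin.sum_univ_three]
  simp only [Nat.succ_eq_add_one, Nat.reduceAdd, smul_cons, smul_eq_mul, mul_neg, mul_one,
    smul_empty, add_cons, head_cons, tail_cons, empty_add_empty, neg_sub, Fin.isValue,
    Pi.add_apply, cons_val_zero, Complex.ofReal_add, Complex.ofReal_neg, Complex.ofReal_mul,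
    Complex.ofReal_sub, Complex.ofReal_one, cons_val_one, Complex.ofReal_pow, cons_val, smul_add,
    omegaWeight, mul_add, Complex.ofReal_div, Complex.ofReal_ofNat, blockProj, jointSignProj,
    blockSigns, Units.val_neg, Units.val_one, Int.reduceNeg, neg_smul, one_smul, add_mul, one_mul,
    neg_mul, neg_add_rev, neg_neg, smul_neg, blockWeights]
  generalize (-1 : ℂ) ^ (N / 2) = ε at hε ⊢
  match_scalars
  · ring
  · ring
  · linear_combination ((2 ^ N)⁻¹ * ((p : ℂ) * h + q + (1 - p - q) * h)) * hε
  · ring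

theorem sum_blockWeights (p q : ℝ) : ∑ b, blockWeights p q b = 1 := by
  rw [Fin.sum_univ_three]
  simp only [blockWeights, cons_val_zero, cons_val_one, cons_val_two, head_cons, tail_cons]
  ring

theorem blockWeights_nonneg {p q : ℝ} (hp : 0 ≤ p) (hq : 0 ≤ q) (hpq : p + q ≤ 1) (b : Fin 3) :
    0 ≤ blockWeights p q b := by
  fin_cases b
  · exact hq
  · exact hp
  · show 0 ≤ 1 - p - q
    linarith

theorem sum_omegaWeight_some (p q h : ℝ) :
    ∑ b, omegaWeight N p q h (some b) = 2 * (1 - h) / 2 ^ N := by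
  simp only [omegaWeight, ← Finset.mul_sum, sum_blockWeights, mul_one]

theorem exists_isQuantumChannel_omegaState_eq (hN : Even N) (i : Fin N) {p' q' : ℝ}
    (hp' : 0 ≤ p') (hq' : 0 ≤ q') (hpq' : p' + q' ≤ 1) :
    ∃ Φ, IsQuantumChannel N Φ ∧ ∀ p q h, Φ (omegaState N p q h) = omegaState N p' q' h := by
  set U : Option (Fin 3) → _ := fun c => siteOp i (blockUnitary c)
  set Q := blockProj N (some 0)
  have hU : ∀ c, (U c)ᴴ * U c = 1 := fun c =>
    siteOp_conjTranspose_mul_self i (blockUnitary_conjTranspose_mul_self c)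
  have hP : ∀ c, U c * Q * (U c)ᴴ = blockProj N c := siteOp_blockUnitary_conj i
  have hXZ := commute_kronPow_pauli_zero_two hN
  have hQ : Q.IsHermitian :=
    jointSignProj_isHermitian (kronPow_pauli_isHermitian 0) (kronPow_pauli_isHermitian 2) hXZ _ _
  have hQQ : IsIdempotentElem Q :=
    jointSignProj_mul_self (kronPow_pauli_mul_self 0) (kronPow_pauli_mul_self 2) hXZ _ _
  have horth : ∀ c d, c ≠ d → U c * Q * (U c)ᴴ * (U d * Q * (U d)ᴴ) = 0 := fun c d hcd => by
    rw [hP, hP]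
    exact jointSignProj_mul_of_ne (kronPow_pauli_mul_self 0) (kronPow_pauli_mul_self 2) hXZ
      (blockSigns_injective.ne hcd)
  have ha := blockWeights_nonneg hp' hq' hpq'
  refine ⟨_, isQuantumChannel_of_kraus _ (sum_collapseKraus_conjTranspose_mul hU hQ hQQ
    (by simp only [hP, sum_blockProj]) ha (sum_blockWeights p' q')), fun p q h => ?_⟩
  rw [omegaState_eq_sum_blockProj hN, omegaState_eq_sum_blockProj hN]
  simp only [← hP]
  rw [sum_collapseKraus_mul_mul_conjTranspose hU hQ hQQ horth ha, Fintype.sum_option]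
  congr 1
  rw [Finset.smul_sum]
  refine Finset.sum_congr rfl fun b _ => ?_
  rw [smul_smul, ← Complex.ofReal_sum, ← Complex.ofReal_mul, sum_omegaWeight_some]
  rfl

end BlockProj

theorem Contractive.eq_of_isQuantumChannel {N : ℕ}
    {D : Matrix (Fin N → Fin 2) (Fin N → Fin 2) ℂ → Matrix (Fin N → Fin 2) (Fin N → Fin 2) ℂ → ℝ}
    (hD : Contractive N D) {Φ Ψ : Matrix (Fin N → Fin 2) (Fin N → Fin 2) ℂ →
      Matrix (Fin N → Fin 2) (Fin N → Fin 2) ℂ} (hΦ : IsQuantumChannel N Φ)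
    (hΨ : IsQuantumChannel N Ψ) {ρ σ ρ' σ' : Matrix (Fin N → Fin 2) (Fin N → Fin 2) ℂ}
    (hΦρ : Φ ρ = ρ') (hΦσ : Φ σ = σ') (hΨρ : Ψ ρ' = ρ) (hΨσ : Ψ σ' = σ) :
    D ρ σ = D ρ' σ' := by
  apply le_antisymm
  · simpa only [hΨρ, hΨσ] using hD Ψ hΨ ρ' σ'
  · simpa only [hΦρ, hΦσ] using hD Φ hΦ ρ σ

theorem stmt16_general (N : ℕ) (hN : Even N) (hN2 : 2 ≤ N)
    (D : Matrix (Fin N → Fin 2) (Fin N → Fin 2) ℂ → Matrix (Fin N → Fin 2) (Fin N → Fin 2) ℂ → ℝ)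
    (hD : Contractive N D)
    (p q h : ℝ) (hp : p ∈ Set.Icc (0:ℝ) 1) (hq : q ∈ Set.Icc (0:ℝ) 1) (hpq : p + q ≤ 1) :
    D (omegaState N p q h) (omegaState N p q 0)
      = D (omegaState N (1/3) (1/3) h) (omegaState N (1/3) (1/3) 0) := by
  have hN0 : 0 < N := by omega
  obtain ⟨Φ, hΦ, hΦω⟩ := exists_isQuantumChannel_omegaState_eq (p' := 1/3) (q' := 1/3) hN
    ⟨0, hN0⟩ (by norm_num) (by norm_num) (by norm_num)
  obtain ⟨Ψ, hΨ, hΨω⟩ := exists_isQuantumChannel_omegaState_eq hN ⟨0, hN0⟩ hp.1 hq.1 hpq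
  exact hD.eq_of_isQuantumChannel hΦ hΨ (hΦω p q h) (hΦω p q 0) (hΨω _ _ h) (hΨω _ _ 0)

theorem stmt16 (N : ℕ) (hN : Even N) (hN2 : 2 ≤ N)
    (D : Matrix (Fin N → Fin 2) (Fin N → Fin 2) ℂ → Matrix (Fin N → Fin 2) (Fin N → Fin 2) ℂ → ℝ)
    (hD : Contractive N D)
    (p q h : ℝ) (hp : p ∈ Set.Icc (0:ℝ) 1) (hq : q ∈ Set.Icc (0:ℝ) 1) (hpq : p + q ≤ 1)
    (hh : h ∈ Set.Ico (0:ℝ) 1) :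
    D (omegaState N p q h) (omegaState N p q 0)
      = D (omegaState N (1/3) (1/3) h) (omegaState N (1/3) (1/3) 0) :=
  stmt16_general N hN hN2 D hD p q h hp hq hpq
end
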